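/- arXiv:2501.16937 — 6 statements merged into one kernel-verified Lean document; each statement's English description precedes it below -/
import Mathlib

section
/- Under the TAID regression recursion, if λ_τ ≥ 0 for every τ, then for every integer t with 0 ≤ t ≤ T one has ‖z̃_t‖ ≥ (t/T)·‖z_0‖. -/
/-!
The ridge step acts coordinatewise, multiplying the `k`-th coordinate by the nonnegative
factor `d k / (λ τ + d k)`. Hence, by induction on `t`, the invariant
`z̃_t k * z0 k ≥ (t / T) * z0 k ^ 2` survives each step: the interpolation toward `z0` adds
exactly the missing `z0 k ^ 2 / T`, and the shrunk old part keeps the sign of `z0 k`.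
Summing over `k` gives `⟪z̃_t, z0⟫ ≥ (t / T) ‖z0‖²`, and Cauchy–Schwarz concludes.
-/

open Matrix in
theorem Matrix.diagonal_mul_inv_smul_one_add_diagonal_mulVec_apply {ι K : Type*} [Fintype ι]
    [DecidableEq ι] [Field K] {c : K} {d : ι → K} (h : ∀ k, c + d k ≠ 0) (x : ι → K) (k : ι) :
    ((diagonal d * (c • 1 + diagonal d)⁻¹) *ᵥ x) k = d k / (c + d k) * x k := by
  have hinv : (c • (1 : Matrix ι ι K) + diagonal d)⁻¹ = diagonal fun k => (c + d k)⁻¹ := by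
    rw [smul_one_eq_diagonal, diagonal_add]
    refine inv_eq_right_inv ?_
    rw [diagonal_mul_diagonal, ← diagonal_one]
    exact congrArg diagonal (funext fun k => mul_inv_cancel₀ (h k))
  rw [hinv, diagonal_mul_diagonal, mulVec_diagonal, div_eq_mul_inv]

theorem EuclideanSpace.mul_norm_le_norm_of_forall_mul_sq_le {ι : Type*} [Fintype ι] {s : ℝ}
    {x y : EuclideanSpace ℝ ι} (h : ∀ k, s * y k ^ 2 ≤ x k * y k) : s * ‖y‖ ≤ ‖x‖ := by
  rcases eq_or_ne y 0 with rfl | hy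
  · simp
  have hsum : s * ‖y‖ ^ 2 ≤ inner ℝ x y := by
    rw [EuclideanSpace.real_norm_sq_eq, PiLp.inner_apply, Finset.mul_sum]
    exact Finset.sum_le_sum fun k _ => by simpa [mul_comm] using h k
  have hpos : 0 < ‖y‖ := norm_pos_iff.mpr hy
  refine le_of_mul_le_mul_right ?_ hpos
  calc s * ‖y‖ * ‖y‖ = s * ‖y‖ ^ 2 := by ring
    _ ≤ ‖x‖ * ‖y‖ := hsum.trans (real_inner_le_norm x y)

theorem taid_scalar_lower_bound {T : ℕ} {y : ℝ} {ρ x : ℕ → ℝ} (hρ : ∀ τ, 0 ≤ ρ τ) (hx0 : x 0 = y)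
    (hx : ∀ τ : ℕ, x (τ + 1) =
      (1 - ((τ + 1 : ℕ) : ℝ) / T) * (ρ τ * x τ) + ((τ + 1 : ℕ) : ℝ) / T * y) :
    ∀ t : ℕ, t ≤ T → (t : ℝ) / T * y ^ 2 ≤ x t * y := by
  intro t
  induction t with
  | zero => simpa [hx0] using mul_self_nonneg y
  | succ τ ih =>
    intro hτ
    have hprev : 0 ≤ x τ * y :=
      (mul_nonneg (by positivity) (sq_nonneg y)).trans (ih (Nat.le_of_succ_le hτ))
    have hs : ((τ + 1 : ℕ) : ℝ) / T ≤ 1 := div_le_one_of_le₀ (by exact_mod_cast hτ) (by positivity)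
    rw [hx τ]
    nlinarith [mul_nonneg (mul_nonneg (sub_nonneg.mpr hs) (hρ τ)) hprev]

theorem taid_norm_lower_bound_general
    (N T : ℕ)
    (d : Fin N → ℝ) (hd : ∀ k, 0 < d k)
    (lam : ℕ → ℝ) (hlam : ∀ τ, 0 ≤ lam τ)
    (z0 : EuclideanSpace ℝ (Fin N))
    (z ztilde : ℕ → EuclideanSpace ℝ (Fin N))
    (hz0 : ztilde 0 = z0)
    (hz : ∀ τ : ℕ, z (τ + 1) =
      ((Matrix.diagonal d) *
        (lam τ • (1 : Matrix (Fin N) (Fin N) ℝ) + Matrix.diagonal d)⁻¹).mulVec (ztilde τ))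
    (hzt : ∀ τ : ℕ, ztilde (τ + 1) =
      (1 - ((τ + 1 : ℕ) : ℝ) / (T : ℝ)) • z (τ + 1) + (((τ + 1 : ℕ) : ℝ) / (T : ℝ)) • z0) :
    ∀ t : ℕ, t ≤ T → ((t : ℝ) / (T : ℝ)) * ‖z0‖ ≤ ‖ztilde t‖ := by
  intro t ht
  refine EuclideanSpace.mul_norm_le_norm_of_forall_mul_sq_le fun k => ?_
  refine taid_scalar_lower_bound (ρ := fun τ => d k / (lam τ + d k)) (x := fun τ => ztilde τ k)
    (fun τ => div_nonneg (hd k).le (add_nonneg (hlam τ) (hd k).le)) (by rw [hz0]) (fun τ => ?_) t ht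
  have hcoord : z (τ + 1) k = d k / (lam τ + d k) * ztilde τ k := by
    rw [hz τ]
    exact Matrix.diagonal_mul_inv_smul_one_add_diagonal_mulVec_apply
      (fun j => (add_pos_of_nonneg_of_pos (hlam τ) (hd j)).ne') _ k
  simp only [hzt τ, PiLp.add_apply, PiLp.smul_apply, smul_eq_mul, hcoord]

/-- Under the TAID regression recursion, if `λ τ ≥ 0` for every `τ`,
then for every integer `t` with `0 ≤ t ≤ T` one has `‖z̃ t‖ ≥ (t/T) ⬝ ‖z 0‖`. -/
theorem taid_norm_lower_bound
    (N T : ℕ) (hN : 1 ≤ N) (hT : 1 ≤ T) (ε : ℝ) (hε : 0 < ε)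
    (d : Fin N → ℝ) (hd : ∀ k, 0 < d k)
    (lam : ℕ → ℝ) (hlam : ∀ τ, 0 ≤ lam τ)
    (z0 : EuclideanSpace ℝ (Fin N))
    (z ztilde : ℕ → EuclideanSpace ℝ (Fin N))
    (hz0 : ztilde 0 = z0)
    (hz : ∀ τ : ℕ, z (τ + 1) =
      ((Matrix.diagonal d) *
        (lam τ • (1 : Matrix (Fin N) (Fin N) ℝ) + Matrix.diagonal d)⁻¹).mulVec (ztilde τ))
    (hzt : ∀ τ : ℕ, ztilde (τ + 1) =
      (1 - ((τ + 1 : ℕ) : ℝ) / (T : ℝ)) • z (τ + 1) + (((τ + 1 : ℕ) : ℝ) / (T : ℝ)) • z0) :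
    ∀ t : ℕ, t ≤ T → ((t : ℝ) / (T : ℝ)) * ‖z0‖ ≤ ‖ztilde t‖ :=
  taid_norm_lower_bound_general N T d hd lam hlam z0 z ztilde hz0 hz hzt
end

section
/- (Non-collapse for late steps; Theorem 2, second case.) Under the TAID regression recursion, if λ_τ ≥ 0 for every τ and ‖z_0‖ > √(Nε), then for every integer t with T·√(Nε)/‖z_0‖ < t ≤ T one has ‖z̃_t‖ > √(Nε); in particular z̃_t ≠ 0, i.e., the step-t prediction does not collapse. -/
/-!
Each coordinate of `z̃_τ` is a multiple `c • z₀ k` of the corresponding coordinate of `z₀` with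
`c ≥ τ / T`: the diagonal filter scales it by `d k / (λ_τ + d k) ≥ 0`, and the interpolation then
adds `(τ + 1) / T • z₀ k`. Hence `‖z̃_t‖ ≥ (t / T) ‖z₀‖`, which exceeds `√(Nε)` as soon as
`t > T √(Nε) / ‖z₀‖`.
-/

namespace Matrix

variable {n K : Type*} [Fintype n] [DecidableEq n] [Field K]

theorem inv_smul_one_add_diagonal (a : K) (d : n → K) (h : ∀ k, a + d k ≠ 0) :
    (a • (1 : Matrix n n K) + diagonal d)⁻¹ = diagonal fun k => (a + d k)⁻¹ := by
  rw [smul_one_eq_diagonal, diagonal_add]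
  refine inv_eq_right_inv ?_
  rw [diagonal_mul_diagonal, ← diagonal_one]
  exact congrArg diagonal (funext fun k => mul_inv_cancel₀ (h k))

theorem diagonal_mul_inv_smul_one_add_diagonal_mulVec (a : K) (d : n → K)
    (h : ∀ k, a + d k ≠ 0) (v : n → K) :
    (diagonal d * (a • (1 : Matrix n n K) + diagonal d)⁻¹) *ᵥ v =
      fun k => d k / (a + d k) * v k := by
  ext k
  rw [inv_smul_one_add_diagonal a d h, diagonal_mul_diagonal, mulVec_diagonal, div_eq_mul_inv]

end Matrix

theorem EuclideanSpace.norm_le_norm_of_forall_norm_apply_le {𝕜 n : Type*} [RCLike 𝕜]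
    [Fintype n] {x y : EuclideanSpace 𝕜 n} (h : ∀ k, ‖x k‖ ≤ ‖y k‖) : ‖x‖ ≤ ‖y‖ := by
  rw [EuclideanSpace.norm_eq, EuclideanSpace.norm_eq]
  gcongr with k
  exact h k

theorem exists_div_le_coeff_of_interpolate {T : ℕ} {α x : ℕ → ℝ} {x₀ : ℝ}
    (hα : ∀ τ, 0 ≤ α τ) (h₀ : x 0 = x₀)
    (hstep : ∀ τ : ℕ, x (τ + 1) =
      (1 - ((τ + 1 : ℕ) : ℝ) / T) * (α τ * x τ) + ((τ + 1 : ℕ) : ℝ) / T * x₀) :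
    ∀ τ ≤ T, ∃ c : ℝ, (τ : ℝ) / T ≤ c ∧ x τ = c * x₀ := by
  intro τ hτ
  induction τ with
  | zero => exact ⟨1, by simp, by simp [h₀]⟩
  | succ τ ih =>
    obtain ⟨c, hc, hxc⟩ := ih (by omega)
    set s : ℝ := ((τ + 1 : ℕ) : ℝ) / T
    have hs : s ≤ 1 := div_le_one_of_le₀ (by exact_mod_cast hτ) (Nat.cast_nonneg T)
    have hc₀ : 0 ≤ c := (div_nonneg (Nat.cast_nonneg _) (Nat.cast_nonneg _)).trans hc
    refine ⟨(1 - s) * (α τ * c) + s, ?_, by rw [hstep, hxc]; ring⟩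
    have := mul_nonneg (sub_nonneg.mpr hs) (mul_nonneg (hα τ) hc₀)
    linarith

theorem taid_non_collapse_late_steps_general
    (N T : ℕ) (hT : 1 ≤ T) (ε : ℝ)
    (d : Fin N → ℝ) (hd : ∀ k, 0 < d k)
    (lam : ℕ → ℝ) (hlam : ∀ τ, 0 ≤ lam τ)
    (z0 : EuclideanSpace ℝ (Fin N))
    (z ztilde : ℕ → EuclideanSpace ℝ (Fin N))
    (hz0 : ztilde 0 = z0)
    (hz : ∀ τ : ℕ, z (τ + 1) =
      ((Matrix.diagonal d) *
        (lam τ • (1 : Matrix (Fin N) (Fin N) ℝ) + Matrix.diagonal d)⁻¹).mulVec (ztilde τ))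
    (hzt : ∀ τ : ℕ, ztilde (τ + 1) =
      (1 - ((τ + 1 : ℕ) : ℝ) / (T : ℝ)) • z (τ + 1) + (((τ + 1 : ℕ) : ℝ) / (T : ℝ)) • z0)
    (hz0big : Real.sqrt ((N : ℝ) * ε) < ‖z0‖) :
    ∀ t : ℕ, (T : ℝ) * Real.sqrt ((N : ℝ) * ε) / ‖z0‖ < (t : ℝ) → t ≤ T →
      Real.sqrt ((N : ℝ) * ε) < ‖ztilde t‖ ∧ ztilde t ≠ 0 := by
  intro t ht htT
  have hpos : ∀ τ k, 0 < lam τ + d k := fun τ k => add_pos_of_nonneg_of_pos (hlam τ) (hd k)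
  have hcoeff : ∀ k, ∃ c : ℝ, (t : ℝ) / T ≤ c ∧ ztilde t k = c * z0 k := fun k =>
    exists_div_le_coeff_of_interpolate (x := fun τ => ztilde τ k)
      (fun τ => (div_pos (hd k) (hpos τ k)).le) (by rw [hz0])
      (fun τ => by
        rw [hzt]
        simp [hz, Matrix.diagonal_mul_inv_smul_one_add_diagonal_mulVec _ _
          fun k => (hpos τ k).ne'])
      t htT
  have hscaled : ‖((t : ℝ) / T) • z0‖ ≤ ‖ztilde t‖ :=
    EuclideanSpace.norm_le_norm_of_forall_norm_apply_le fun k => by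
      obtain ⟨c, hc, hzc⟩ := hcoeff k
      rw [hzc, PiLp.smul_apply, norm_smul, norm_mul]
      gcongr
      rw [Real.norm_of_nonneg (by positivity)]
      exact hc.trans (Real.le_norm_self c)
  have hlt : Real.sqrt ((N : ℝ) * ε) < ‖((t : ℝ) / T) • z0‖ := by
    have hz0pos : 0 < ‖z0‖ := (Real.sqrt_nonneg _).trans_lt hz0big
    have hTpos : (0 : ℝ) < T := by exact_mod_cast hT
    rw [norm_smul, Real.norm_of_nonneg (by positivity), div_mul_eq_mul_div, lt_div_iff₀ hTpos]
    rw [div_lt_iff₀ hz0pos] at ht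
    linarith
  have hbig := hlt.trans_le hscaled
  exact ⟨hbig, norm_pos_iff.mp ((Real.sqrt_nonneg _).trans_lt hbig)⟩

/-- (Non-collapse for late steps.) Under the TAID regression recursion,
if `λ τ ≥ 0` for every `τ` and `‖z 0‖ > √(Nε)`, then for every integer `t` with
`T·√(Nε)/‖z 0‖ < t ≤ T` one has `‖z̃ t‖ > √(Nε)`; in particular `z̃ t ≠ 0`. -/
theorem taid_non_collapse_late_steps
    (N T : ℕ) (hN : 1 ≤ N) (hT : 1 ≤ T) (ε : ℝ) (hε : 0 < ε)
    (d : Fin N → ℝ) (hd : ∀ k, 0 < d k)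
    (lam : ℕ → ℝ) (hlam : ∀ τ, 0 ≤ lam τ)
    (z0 : EuclideanSpace ℝ (Fin N))
    (z ztilde : ℕ → EuclideanSpace ℝ (Fin N))
    (hz0 : ztilde 0 = z0)
    (hz : ∀ τ : ℕ, z (τ + 1) =
      ((Matrix.diagonal d) *
        (lam τ • (1 : Matrix (Fin N) (Fin N) ℝ) + Matrix.diagonal d)⁻¹).mulVec (ztilde τ))
    (hzt : ∀ τ : ℕ, ztilde (τ + 1) =
      (1 - ((τ + 1 : ℕ) : ℝ) / (T : ℝ)) • z (τ + 1) + (((τ + 1 : ℕ) : ℝ) / (T : ℝ)) • z0)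
    (hz0big : Real.sqrt ((N : ℝ) * ε) < ‖z0‖) :
    ∀ t : ℕ, (T : ℝ) * Real.sqrt ((N : ℝ) * ε) / ‖z0‖ < (t : ℝ) → t ≤ T →
      Real.sqrt ((N : ℝ) * ε) < ‖ztilde t‖ ∧ ztilde t ≠ 0 :=
  taid_non_collapse_late_steps_general N T hT ε d hd lam hlam z0 z ztilde hz0 hz hzt hz0big
end

section
/- (Closed-form expansion of the TAID recursion.) Under the TAID regression recursion, write A_τ := D(λ_τ I + D)^{-1}. Then for every integer t with 1 ≤ t ≤ T − 1, one has z̃_t = Ā_t z_0, where Ā_t := (T!/(T^{t+1}·(T−t−1)!))·∏_{τ=0}^{t−1} A_τ + Σ_{τ=1}^{t−1} ((t−τ)·(T−t+τ−1)!/(T^{τ+1}·(T−t−1)!))·∏_{s=1}^{τ} A_{t−s} + (t/T)·I. -/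
/-!
The matrices `Ā_t` with `z̃_t = Ā_t z_0` obey the affine recursion
`Ā_{t+1} = (1 - (t+1)/T) A_t Ā_t + ((t+1)/T) I`, `Ā_0 = I`. Unrolling it writes `Ā_t` as a sum
of descending products `A_{t-1} ⋯ A_{t-k}`, each weighted by `∏_{j=t-k+1}^{t} (1 - j/T)`, a ratio
of factorials. The `A_τ` are diagonal, so they commute and the full product `A_{t-1} ⋯ A_0` may be
written in increasing order.
-/

open Finset

section
variable {R : Type*} [Monoid R]

-- `descProd a t k = a (t-1) * a (t-2) * ⋯ * a (t-k)`, the paper's `∏_{s=1}^{k} A_{t-s}`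
def descProd (a : ℕ → R) (t k : ℕ) : R :=
  ((List.range k).map fun s => a (t - (s + 1))).prod

@[simp] theorem descProd_zero (a : ℕ → R) (t : ℕ) : descProd a t 0 = 1 := rfl

theorem descProd_succ (a : ℕ → R) (t k : ℕ) :
    descProd a (t + 1) (k + 1) = a t * descProd a t k := by
  simp [descProd, List.range_succ_eq_map, Function.comp_def, Nat.add_sub_add_right]

theorem descProd_succ_right (a : ℕ → R) (t k : ℕ) :
    descProd a t (k + 1) = descProd a t k * a (t - (k + 1)) := by
  simp [descProd, List.range_succ]

theorem descProd_self_eq_prod_range {a : ℕ → R} (ha : ∀ i j, Commute (a i) (a j)) (t : ℕ) :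
    descProd a t t = ((List.range t).map a).prod := by
  induction t with
  | zero => rfl
  | succ t ih =>
    rw [descProd_succ, ih, List.range_succ, List.map_append, List.prod_append,
      List.map_singleton, List.prod_singleton]
    exact (Commute.list_prod_right _ _ fun x hx => by
      obtain ⟨i, -, rfl⟩ := List.mem_map.1 hx
      exact ha t i).eq

theorem descProd_smul {K : Type*} [CommMonoid K] [MulAction K R] [IsScalarTower K R R]
    [SMulCommClass K R R] (c : ℕ → K) (a : ℕ → R) (t k : ℕ) :
    descProd (fun τ => c τ • a τ) t k = descProd c t k • descProd a t k := by
  induction k with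
  | zero => simp
  | succ k ih => rw [descProd_succ_right, descProd_succ_right, descProd_succ_right, ih,
      smul_mul_smul]

end

section
variable {R M : Type*} [Semiring R] [AddCommMonoid M] [Module R M]

theorem eq_smul_of_anchored_recurrence (a β : ℕ → R) (x : ℕ → M)
    (hx : ∀ t, x (t + 1) = a t • x t + β t • x 0) (t : ℕ) :
    x t = (descProd a t t + ∑ τ ∈ range t, descProd a t τ * β (t - 1 - τ)) • x 0 := by
  induction t with
  | zero => simp
  | succ t ih =>
    have hstep : descProd a (t + 1) (t + 1) + ∑ τ ∈ range (t + 1), descProd a (t + 1) τ * β (t - τ)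
        = a t * (descProd a t t + ∑ τ ∈ range t, descProd a t τ * β (t - 1 - τ)) + β t := by
      simp only [sum_range_succ', descProd_succ, descProd_zero, one_mul, Nat.sub_zero, mul_add,
        mul_sum, mul_assoc, Nat.sub_sub, add_comm 1, add_assoc]
    rw [hx, ih, smul_smul, ← add_smul, Nat.add_sub_cancel, hstep]

end

theorem commute_diagonal_mul_smul_one_add_diagonal_inv {n α : Type*} [Fintype n]
    [DecidableEq n] [CommRing α] (d : n → α) (c c' : α) :
    Commute (Matrix.diagonal d * (c • (1 : Matrix n n α) + Matrix.diagonal d)⁻¹)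
      (Matrix.diagonal d * (c' • (1 : Matrix n n α) + Matrix.diagonal d)⁻¹) := by
  simp only [Matrix.smul_one_eq_diagonal, Matrix.diagonal_add, Matrix.inv_diagonal,
    Matrix.diagonal_mul_diagonal]
  exact Matrix.commute_diagonal _ _

theorem descProd_one_sub_div_eq (T t k : ℕ) (htT : t < T) (hkt : k ≤ t) :
    descProd (fun τ => 1 - ((τ + 1 : ℕ) : ℝ) / T) t k
      = ((T - t + k - 1).factorial : ℝ) / ((T : ℝ) ^ k * ((T - t - 1).factorial : ℝ)) := by
  obtain ⟨m, rfl⟩ : ∃ m, T = t + 1 + m := ⟨T - t - 1, by omega⟩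
  induction k with
  | zero =>
    rw [descProd_zero, pow_zero, one_mul, show t + 1 + m - t + 0 - 1 = t + 1 + m - t - 1 by omega,
      div_self (by positivity)]
  | succ k ih =>
    rw [descProd_succ_right, ih (by omega), show t + 1 + m - t + (k + 1) - 1 = m + k + 1 by omega,
      show t + 1 + m - t + k - 1 = m + k by omega, show t - (k + 1) + 1 = t - k by omega,
      Nat.factorial_succ, Nat.cast_sub (by omega : k ≤ t)]
    push_cast
    field_simp
    ring

theorem taid_closed_form_matrix_eq {n : Type*} [Fintype n] [DecidableEq n]
    (A : ℕ → Matrix n n ℝ) (hA : ∀ i j, Commute (A i) (A j)) (T t : ℕ) (ht : 1 ≤ t)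
    (htT : t < T) :
    descProd (fun τ => (1 - ((τ + 1 : ℕ) : ℝ) / T) • A τ) t t
        + ∑ τ ∈ range t, descProd (fun τ => (1 - ((τ + 1 : ℕ) : ℝ) / T) • A τ) t τ
          * ((((t - 1 - τ + 1 : ℕ) : ℝ) / T) • 1)
      = ((T.factorial : ℝ) / ((T : ℝ) ^ (t + 1) * ((T - t - 1).factorial : ℝ))) •
            ((List.range t).map A).prod
         + ∑ τ ∈ Ico 1 t,
            ((((t - τ : ℕ) : ℝ) * ((T - t + τ - 1).factorial : ℝ)) /
                ((T : ℝ) ^ (τ + 1) * ((T - t - 1).factorial : ℝ))) • descProd A t τ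
         + ((t : ℝ) / (T : ℝ)) • (1 : Matrix n n ℝ) := by
  have hT : (T : ℝ) ≠ 0 := by norm_cast; omega
  have hfull : ((T - t + t - 1).factorial : ℝ) / ((T : ℝ) ^ t * ((T - t - 1).factorial : ℝ))
      = (T.factorial : ℝ) / ((T : ℝ) ^ (t + 1) * ((T - t - 1).factorial : ℝ)) := by
    rw [show T - t + t - 1 = T - 1 by omega, ← Nat.mul_factorial_pred (by omega : T ≠ 0)]
    push_cast
    field_simp
    ring
  have hterm : ∀ τ ∈ Ico 1 t,
      descProd (fun τ => (1 - ((τ + 1 : ℕ) : ℝ) / T) • A τ) t τ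
          * ((((t - 1 - τ + 1 : ℕ) : ℝ) / T) • 1)
        = ((((t - τ : ℕ) : ℝ) * ((T - t + τ - 1).factorial : ℝ)) /
            ((T : ℝ) ^ (τ + 1) * ((T - t - 1).factorial : ℝ))) • descProd A t τ := by
    intro τ hτ
    rw [mem_Ico] at hτ
    rw [descProd_smul, descProd_one_sub_div_eq T t τ htT hτ.2.le, smul_mul_smul_comm,
      mul_one, show t - 1 - τ + 1 = t - τ by omega]
    congr 1
    field_simp
    ring
  rw [descProd_smul, descProd_self_eq_prod_range hA, descProd_one_sub_div_eq T t t htT le_rfl,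
    hfull, sum_range_eq_add_Ico _ ht, sum_congr rfl hterm, descProd_zero, one_mul,
    show t - 1 - 0 + 1 = t by omega]
  abel

theorem taid_closed_form_expansion_general
    (N T : ℕ)
    (d : Fin N → ℝ)
    (lam : ℕ → ℝ)
    (z0 : EuclideanSpace ℝ (Fin N))
    (z ztilde : ℕ → EuclideanSpace ℝ (Fin N))
    (A : ℕ → Matrix (Fin N) (Fin N) ℝ)
    (hA : ∀ τ : ℕ, A τ = (Matrix.diagonal d) *
      (lam τ • (1 : Matrix (Fin N) (Fin N) ℝ) + Matrix.diagonal d)⁻¹)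
    (hz0 : ztilde 0 = z0)
    (hz : ∀ τ : ℕ, z (τ + 1) = (A τ).mulVec (ztilde τ))
    (hzt : ∀ τ : ℕ, ztilde (τ + 1) =
      (1 - ((τ + 1 : ℕ) : ℝ) / (T : ℝ)) • z (τ + 1) + (((τ + 1 : ℕ) : ℝ) / (T : ℝ)) • z0) :
    ∀ t : ℕ, 1 ≤ t → t ≤ T - 1 →
      ztilde t =
        (((T.factorial : ℝ) / ((T : ℝ) ^ (t + 1) * ((T - t - 1).factorial : ℝ))) •
            ((List.range t).map A).prod
         + ∑ τ ∈ Finset.Ico 1 t,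
            ((((t - τ : ℕ) : ℝ) * ((T - t + τ - 1).factorial : ℝ)) /
                ((T : ℝ) ^ (τ + 1) * ((T - t - 1).factorial : ℝ))) •
              ((List.range τ).map (fun s => A (t - (s + 1)))).prod
         + ((t : ℝ) / (T : ℝ)) • (1 : Matrix (Fin N) (Fin N) ℝ)).mulVec z0 := by
  intro t ht htT
  have hrec : ∀ τ, (ztilde (τ + 1)).ofLp
      = ((1 - ((τ + 1 : ℕ) : ℝ) / T) • A τ) • (ztilde τ).ofLp
        + ((((τ + 1 : ℕ) : ℝ) / T) • (1 : Matrix (Fin N) (Fin N) ℝ)) • (ztilde 0).ofLp := by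
    intro τ
    rw [hzt, WithLp.ofLp_add, WithLp.ofLp_smul, WithLp.ofLp_smul, hz, hz0, smul_assoc, smul_assoc,
      Matrix.smul_eq_mulVec, one_smul]
  have hcomm : ∀ i j, Commute (A i) (A j) := fun i j => by
    rw [hA i, hA j]
    exact commute_diagonal_mul_smul_one_add_diagonal_inv d (lam i) (lam j)
  rw [eq_smul_of_anchored_recurrence (x := fun τ => (ztilde τ).ofLp) _ _ hrec t, hz0,
    Matrix.smul_eq_mulVec, taid_closed_form_matrix_eq A hcomm T t ht (by omega)]
  rfl

/-- (Closed-form expansion of the TAID recursion.) With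
`A τ := D (λ_τ I + D)⁻¹`, for every `1 ≤ t ≤ T − 1` one has `z̃ t = Ā_t z0`, where
`Ā_t := (T!/(T^{t+1}·(T−t−1)!))·∏_{τ=0}^{t−1} A_τ
      + Σ_{τ=1}^{t−1} ((t−τ)·(T−t+τ−1)!/(T^{τ+1}·(T−t−1)!))·∏_{s=1}^{τ} A_{t−s}
      + (t/T)·I`. -/
theorem taid_closed_form_expansion
    (N T : ℕ) (hN : 1 ≤ N) (hT : 1 ≤ T) (ε : ℝ) (hε : 0 < ε)
    (d : Fin N → ℝ) (hd : ∀ k, 0 < d k)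
    (lam : ℕ → ℝ) (hlam : ∀ τ, 0 ≤ lam τ)
    (z0 : EuclideanSpace ℝ (Fin N))
    (z ztilde : ℕ → EuclideanSpace ℝ (Fin N))
    (A : ℕ → Matrix (Fin N) (Fin N) ℝ)
    (hA : ∀ τ : ℕ, A τ = (Matrix.diagonal d) *
      (lam τ • (1 : Matrix (Fin N) (Fin N) ℝ) + Matrix.diagonal d)⁻¹)
    (hz0 : ztilde 0 = z0)
    (hz : ∀ τ : ℕ, z (τ + 1) = (A τ).mulVec (ztilde τ))
    (hzt : ∀ τ : ℕ, ztilde (τ + 1) =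
      (1 - ((τ + 1 : ℕ) : ℝ) / (T : ℝ)) • z (τ + 1) + (((τ + 1 : ℕ) : ℝ) / (T : ℝ)) • z0) :
    ∀ t : ℕ, 1 ≤ t → t ≤ T - 1 →
      ztilde t =
        (((T.factorial : ℝ) / ((T : ℝ) ^ (t + 1) * ((T - t - 1).factorial : ℝ))) •
            ((List.range t).map A).prod
         + ∑ τ ∈ Finset.Ico 1 t,
            ((((t - τ : ℕ) : ℝ) * ((T - t + τ - 1).factorial : ℝ)) /
                ((T : ℝ) ^ (τ + 1) * ((T - t - 1).factorial : ℝ))) •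
              ((List.range τ).map (fun s => A (t - (s + 1)))).prod
         + ((t : ℝ) / (T : ℝ)) • (1 : Matrix (Fin N) (Fin N) ℝ)).mulVec z0 :=
  taid_closed_form_expansion_general N T d lam z0 z ztilde A hA hz0 hz hzt
end

section
/- (Characterization of the Lagrange multiplier; Eq. (8) of the analysis.) Let G be a symmetric positive definite N×N real matrix all of whose eigenvalues lie in [d_min, d_max] with 0 < d_min ≤ d_max, let λ > 0, let y ∈ ℝ^N, and set f* := G(λ I + G)^{-1} y. Let ε > 0 and suppose ‖y − f*‖² = Nε and ‖y‖ > √(Nε). Then there exists α ∈ [d_min, d_max] such that λ = α·√(Nε)/(‖y‖ − √(Nε)). -/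
/-!
Put `u := (λI + G)⁻¹ y`. Then `y - f* = λ u` and `y = λ u + G u`, so `√(Nε) = λ ‖u‖`, while the
eigenvalue bounds on `G` squeeze `(λ + d_min) ‖u‖ ≤ ‖y‖ ≤ (λ + d_max) ‖u‖`. Hence
`α := (‖y‖ - λ ‖u‖) / ‖u‖` lies in `[d_min, d_max]`, and solving for `λ` gives the claim.
-/

open scoped RealInnerProductSpace

namespace Matrix

theorem mul_inv_smul_one_add {n R : Type*} [Fintype n] [DecidableEq n] [CommRing R]
    {G : Matrix n n R} {l : R} (h : IsUnit (l • 1 + G).det) :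
    G * (l • 1 + G)⁻¹ = 1 - l • (l • 1 + G)⁻¹ := by
  calc G * (l • 1 + G)⁻¹ = (l • 1 + G) * (l • 1 + G)⁻¹ - l • (l • 1 + G)⁻¹ := by
        rw [add_mul, smul_mul_assoc, one_mul, add_sub_cancel_left]
    _ = 1 - l • (l • 1 + G)⁻¹ := by rw [mul_nonsing_inv _ h]

section Resolvent

variable {n 𝕜 : Type*} [Fintype n] [DecidableEq n] [RCLike 𝕜] {G : Matrix n n 𝕜} {l : 𝕜}

theorem sub_toEuclideanLin_mul_inv_smul_one_add (h : IsUnit (l • 1 + G).det)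
    (y : EuclideanSpace 𝕜 n) :
    y - toEuclideanLin (G * (l • 1 + G)⁻¹) y = l • toEuclideanLin (l • 1 + G)⁻¹ y := by
  rw [mul_inv_smul_one_add h, map_sub, map_smul, toLpLin_one]
  simp

theorem smul_add_toEuclideanLin_inv_smul_one_add (h : IsUnit (l • 1 + G).det)
    (y : EuclideanSpace 𝕜 n) :
    l • toEuclideanLin (l • 1 + G)⁻¹ y + toEuclideanLin G (toEuclideanLin (l • 1 + G)⁻¹ y) = y := by
  have hB : toEuclideanLin (l • 1 + G) ∘ₗ toEuclideanLin (l • 1 + G)⁻¹ = LinearMap.id := by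
    rw [← toLpLin_mul_same, mul_nonsing_inv _ h, toLpLin_one]
  simpa [map_add, map_smul, toLpLin_one] using LinearMap.congr_fun hB y

end Resolvent

namespace IsHermitian

variable {n : Type*} [Fintype n] [DecidableEq n] {A : Matrix n n ℝ} (hA : A.IsHermitian)
  (v : EuclideanSpace ℝ n)
include hA

theorem inner_eigenvectorBasis_toEuclideanLin (i : n) :
    ⟪hA.eigenvectorBasis i, toEuclideanLin A v⟫ =
      hA.eigenvalues i * ⟪hA.eigenvectorBasis i, v⟫ := by
  have hAi : toEuclideanLin A (hA.eigenvectorBasis i) = hA.eigenvalues i • hA.eigenvectorBasis i :=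
    WithLp.ofLp_injective 2 (hA.mulVec_eigenvectorBasis i)
  rw [← isSymmetric_toEuclideanLin_iff.mpr hA, hAi, real_inner_smul_left]

theorem inner_toEuclideanLin_self_eq_sum :
    ⟪toEuclideanLin A v, v⟫ = ∑ i, hA.eigenvalues i * ⟪hA.eigenvectorBasis i, v⟫ ^ 2 := by
  rw [← hA.eigenvectorBasis.sum_inner_mul_inner]
  refine Finset.sum_congr rfl fun i _ => ?_
  rw [real_inner_comm, hA.inner_eigenvectorBasis_toEuclideanLin]
  ring

theorem norm_toEuclideanLin_sq_eq_sum :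
    ‖toEuclideanLin A v‖ ^ 2 = ∑ i, hA.eigenvalues i ^ 2 * ⟪hA.eigenvectorBasis i, v⟫ ^ 2 := by
  rw [← hA.eigenvectorBasis.sum_sq_inner_right]
  refine Finset.sum_congr rfl fun i _ => ?_
  rw [hA.inner_eigenvectorBasis_toEuclideanLin]
  ring

theorem mul_norm_sq_le_inner_toEuclideanLin_self {a : ℝ} (ha : ∀ i, a ≤ hA.eigenvalues i) :
    a * ‖v‖ ^ 2 ≤ ⟪toEuclideanLin A v, v⟫ := by
  rw [hA.inner_toEuclideanLin_self_eq_sum, ← hA.eigenvectorBasis.sum_sq_inner_right, Finset.mul_sum]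
  gcongr with i
  exact ha i

theorem norm_toEuclideanLin_le {b : ℝ} (hb : 0 ≤ b) (hA_le : ∀ i, |hA.eigenvalues i| ≤ b) :
    ‖toEuclideanLin A v‖ ≤ b * ‖v‖ := by
  refine (pow_le_pow_iff_left₀ (norm_nonneg _) (by positivity) two_ne_zero).mp ?_
  rw [hA.norm_toEuclideanLin_sq_eq_sum, mul_pow, ← hA.eigenvectorBasis.sum_sq_inner_right,
    Finset.mul_sum]
  refine Finset.sum_le_sum fun i _ => mul_le_mul_of_nonneg_right ?_ (sq_nonneg _)
  exact sq_le_sq.mpr ((hA_le i).trans (le_abs_self b))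

theorem mul_norm_le_norm_smul_add_toEuclideanLin {a : ℝ} (ha : ∀ i, a ≤ hA.eigenvalues i)
    (l : ℝ) : (l + a) * ‖v‖ ≤ ‖l • v + toEuclideanLin A v‖ := by
  rcases (norm_nonneg v).eq_or_lt with hv | hv
  · simp [← hv]
  refine le_of_mul_le_mul_right ?_ hv
  calc (l + a) * ‖v‖ * ‖v‖ = l * ‖v‖ ^ 2 + a * ‖v‖ ^ 2 := by ring
    _ ≤ ⟪l • v + toEuclideanLin A v, v⟫ := by
      rw [inner_add_left, real_inner_smul_left, real_inner_self_eq_norm_sq]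
      gcongr
      exact hA.mul_norm_sq_le_inner_toEuclideanLin_self v ha
    _ ≤ ‖l • v + toEuclideanLin A v‖ * ‖v‖ := real_inner_le_norm _ _

theorem norm_smul_add_toEuclideanLin_le {b l : ℝ} (hb : 0 ≤ b)
    (hA_le : ∀ i, |hA.eigenvalues i| ≤ b) (hl : 0 ≤ l) :
    ‖l • v + toEuclideanLin A v‖ ≤ (l + b) * ‖v‖ :=
  calc ‖l • v + toEuclideanLin A v‖ ≤ ‖l • v‖ + ‖toEuclideanLin A v‖ := norm_add_le _ _
    _ ≤ l * ‖v‖ + b * ‖v‖ := by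
      rw [norm_smul, Real.norm_of_nonneg hl]
      gcongr
      exact hA.norm_toEuclideanLin_le v hb hA_le
    _ = (l + b) * ‖v‖ := by ring

end IsHermitian

end Matrix

theorem exists_mem_Icc_eq_mul_div_sub {a b l s t : ℝ} (hs : 0 ≤ s) (hlt : l * s < t)
    (hlow : (l + a) * s ≤ t) (hup : t ≤ (l + b) * s) :
    ∃ α ∈ Set.Icc a b, l = α * (l * s) / (t - l * s) := by
  have hs : 0 < s := hs.lt_of_ne <| by rintro rfl; linarith
  have ht : t - l * s ≠ 0 := by linarith
  refine ⟨(t - l * s) / s, ⟨?_, ?_⟩, ?_⟩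
  · rw [le_div_iff₀ hs]; linarith
  · rw [div_le_iff₀ hs]; linarith
  · field_simp

theorem ridge_lagrange_multiplier_characterization_general
    (N : ℕ)
    (G : Matrix (Fin N) (Fin N) ℝ) (hG : G.PosDef)
    (dmin dmax : ℝ) (hdmin : 0 < dmin) (hdd : dmin ≤ dmax)
    (heig : ∀ i, hG.1.eigenvalues i ∈ Set.Icc dmin dmax)
    (l : ℝ) (hl : 0 < l)
    (y : EuclideanSpace ℝ (Fin N))
    (fstar : EuclideanSpace ℝ (Fin N))
    (hfstar : fstar = (G * (l • (1 : Matrix (Fin N) (Fin N) ℝ) + G)⁻¹).mulVec y)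
    (ε : ℝ)
    (hres : ‖y - fstar‖ ^ 2 = (N : ℝ) * ε)
    (hy : Real.sqrt ((N : ℝ) * ε) < ‖y‖) :
    ∃ α ∈ Set.Icc dmin dmax,
      l = α * Real.sqrt ((N : ℝ) * ε) / (‖y‖ - Real.sqrt ((N : ℝ) * ε)) := by
  have hB : IsUnit (l • 1 + G).det := (Matrix.isUnit_iff_isUnit_det _).mp
    ((Matrix.PosDef.one.smul hl).add_posSemidef hG.posSemidef).isUnit
  have hy_eq := Matrix.smul_add_toEuclideanLin_inv_smul_one_add hB y
  replace hfstar : fstar = Matrix.toEuclideanLin (G * (l • 1 + G)⁻¹) y :=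
    WithLp.ofLp_injective 2 hfstar
  set u := Matrix.toEuclideanLin (l • 1 + G)⁻¹ y
  have hr : Real.sqrt ((N : ℝ) * ε) = l * ‖u‖ := by
    rw [← hres, Real.sqrt_sq (norm_nonneg _), hfstar,
      Matrix.sub_toEuclideanLin_mul_inv_smul_one_add hB, norm_smul, Real.norm_of_nonneg hl.le]
  have hG_abs (i : Fin N) : |hG.1.eigenvalues i| ≤ dmax :=
    (abs_of_pos (hdmin.trans_le (heig i).1)).trans_le (heig i).2
  rw [hr, ← hy_eq] at hy ⊢
  exact exists_mem_Icc_eq_mul_div_sub (norm_nonneg u) hy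
    (hG.1.mul_norm_le_norm_smul_add_toEuclideanLin u (fun i => (heig i).1) l)
    (hG.1.norm_smul_add_toEuclideanLin_le u (hdmin.le.trans hdd) hG_abs hl.le)

/-- (Characterization of the Lagrange multiplier.) Let `G` be symmetric
positive definite with eigenvalues in `[d_min, d_max]`, `λ > 0`, `f* := G(λI+G)⁻¹ y`.
If `‖y − f*‖² = Nε` and `‖y‖ > √(Nε)` then `λ = α·√(Nε)/(‖y‖ − √(Nε))` for some
`α ∈ [d_min, d_max]`. -/
theorem ridge_lagrange_multiplier_characterization
    (N : ℕ) (hN : 1 ≤ N)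
    (G : Matrix (Fin N) (Fin N) ℝ) (hG : G.PosDef)
    (dmin dmax : ℝ) (hdmin : 0 < dmin) (hdd : dmin ≤ dmax)
    (heig : ∀ i, hG.1.eigenvalues i ∈ Set.Icc dmin dmax)
    (l : ℝ) (hl : 0 < l)
    (y : EuclideanSpace ℝ (Fin N))
    (fstar : EuclideanSpace ℝ (Fin N))
    (hfstar : fstar = (G * (l • (1 : Matrix (Fin N) (Fin N) ℝ) + G)⁻¹).mulVec y)
    (ε : ℝ) (hε : 0 < ε)
    (hres : ‖y - fstar‖ ^ 2 = (N : ℝ) * ε)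
    (hy : Real.sqrt ((N : ℝ) * ε) < ‖y‖) :
    ∃ α ∈ Set.Icc dmin dmax,
      l = α * Real.sqrt ((N : ℝ) * ε) / (‖y‖ - Real.sqrt ((N : ℝ) * ε)) :=
  ridge_lagrange_multiplier_characterization_general N G hG dmin dmax hdmin hdd heig l hl y fstar
    hfstar ε hres hy
end

section
/- (One-step lower bound on the normalized signal.) Under the TAID regression recursion, let γ ∈ (0, 1], suppose r_0 > 1, let 1 ≤ t ≤ T be an integer with t/T ≤ γ/r_0, suppose r_{t−1} > 1, and suppose λ_{t−1} = α·√(Nε)/(‖z̃_{t−1}‖ − √(Nε)) for some α ∈ [d_min, d_max]. Then r_t ≥ (1 − γ/r_0)·r_{t−1}/(κ/(r_{t−1} − 1) + 1) − γ. -/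
set_option maxHeartbeats 1000000 in
/-- (One-step lower bound on the normalized signal.) Under the TAID
regression recursion, if `γ ∈ (0,1]`, `r 0 > 1`, `1 ≤ t ≤ T`, `t/T ≤ γ/r 0`, `r (t−1) > 1`,
and `λ_{t−1} = α·√(Nε)/(‖z̃_{t−1}‖ − √(Nε))` for some `α ∈ [d_min, d_max]`, then
`r t ≥ (1 − γ/r 0)·r(t−1)/(κ/(r(t−1) − 1) + 1) − γ`. -/
theorem taid_one_step_lower_bound
    (N T : ℕ) (hN : 1 ≤ N) (hT : 1 ≤ T) (ε : ℝ) (hε : 0 < ε)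
    (d : Fin N → ℝ) (hd : ∀ k, 0 < d k) (dmin dmax : ℝ)
    (hdminEq : dmin = ⨅ k, d k) (hdmaxEq : dmax = ⨆ k, d k)
    (κ : ℝ) (hκ : κ = dmax / dmin)
    (lam : ℕ → ℝ)
    (z0 : EuclideanSpace ℝ (Fin N))
    (z ztilde : ℕ → EuclideanSpace ℝ (Fin N))
    (hz0 : ztilde 0 = z0)
    (hz : ∀ τ : ℕ, z (τ + 1) =
      ((Matrix.diagonal d) *
        (lam τ • (1 : Matrix (Fin N) (Fin N) ℝ) + Matrix.diagonal d)⁻¹).mulVec (ztilde τ))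
    (hzt : ∀ τ : ℕ, ztilde (τ + 1) =
      (1 - ((τ + 1 : ℕ) : ℝ) / (T : ℝ)) • z (τ + 1) + (((τ + 1 : ℕ) : ℝ) / (T : ℝ)) • z0)
    (r : ℕ → ℝ) (hr : ∀ τ, r τ = ‖ztilde τ‖ / Real.sqrt ((N : ℝ) * ε))
    (γ : ℝ) (hγ : γ ∈ Set.Ioc (0 : ℝ) 1)
    (hr0 : 1 < r 0)
    (t : ℕ) (ht1 : 1 ≤ t) (htT : t ≤ T)
    (htratio : (t : ℝ) / (T : ℝ) ≤ γ / r 0)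
    (hrt1 : 1 < r (t - 1))
    (α : ℝ) (hα : α ∈ Set.Icc dmin dmax)
    (hlam : lam (t - 1) =
      α * Real.sqrt ((N : ℝ) * ε) / (‖ztilde (t - 1)‖ - Real.sqrt ((N : ℝ) * ε))) :
    (1 - γ / r 0) * r (t - 1) / (κ / (r (t - 1) - 1) + 1) - γ ≤ r t := by
  obtain ⟨hγ0, hγ1⟩ := hγ
  obtain ⟨hα1, hα2⟩ := hα
  have hNne : Nonempty (Fin N) := ⟨⟨0, hN⟩⟩
  set n := t - 1 with hn
  have htn : t = n + 1 := (Nat.succ_pred_eq_of_pos ht1).symm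
  set s := Real.sqrt ((N : ℝ) * ε) with hs
  have hs0 : 0 < s := Real.sqrt_pos.mpr (by positivity)
  -- min/max facts
  have hbddb : BddBelow (Set.range d) := (Set.finite_range d).bddBelow
  have hbdda : BddAbove (Set.range d) := (Set.finite_range d).bddAbove
  have hdmin_le : ∀ k, dmin ≤ d k := fun k => hdminEq ▸ ciInf_le hbddb k
  have hle_dmax : ∀ k, d k ≤ dmax := fun k => hdmaxEq ▸ le_ciSup hbdda k
  have hdmin_pos : 0 < dmin := by
    obtain ⟨k0, hk0⟩ := Finite.exists_min d
    have h1 : d k0 ≤ dmin := hdminEq ▸ le_ciInf hk0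
    linarith [hd k0]
  have hdmax_pos : 0 < dmax :=
    lt_of_lt_of_le hdmin_pos ((hdmin_le ⟨0, hN⟩).trans (hle_dmax ⟨0, hN⟩))
  set y := ztilde n with hy
  have hrn : r n = ‖y‖ / s := hr n
  have hy_gt : s < ‖y‖ := by
    have h1 : (1 : ℝ) < ‖y‖ / s := hrn ▸ hrt1
    calc s = 1 * s := (one_mul s).symm
    _ < (‖y‖ / s) * s := by exact mul_lt_mul_of_pos_right h1 hs0
    _ = ‖y‖ := by field_simp
  have hys : 0 < ‖y‖ - s := by linarith
  set L := lam n with hL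
  have hα_pos : 0 < α := lt_of_lt_of_le hdmin_pos hα1
  have hL_pos : 0 < L := by
    rw [hlam]
    exact div_pos (by positivity) hys
  -- matrix computation
  have hM : (Matrix.diagonal d) * (L • (1 : Matrix (Fin N) (Fin N) ℝ) + Matrix.diagonal d)⁻¹
      = Matrix.diagonal (fun k => d k * (L + d k)⁻¹) := by
    have h1 : L • (1 : Matrix (Fin N) (Fin N) ℝ) + Matrix.diagonal d
        = Matrix.diagonal (fun k => L + d k) := by
      ext i j
      rcases eq_or_ne i j with h | h
      · subst h
        simp [Matrix.one_apply, Matrix.diagonal_apply_eq]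
      · simp [Matrix.one_apply_ne h, Matrix.diagonal_apply_ne _ h]
    have hLd : ∀ k, 0 < L + d k := fun k => by linarith [hd k]
    have h2 : Matrix.diagonal (fun k => L + d k) *
        Matrix.diagonal (fun k => (L + d k)⁻¹) = 1 := by
      have h3 : (fun k => (L + d k) * (L + d k)⁻¹) = fun _ : Fin N => (1 : ℝ) := by
        funext k
        exact mul_inv_cancel₀ (hLd k).ne'
      rw [Matrix.diagonal_mul_diagonal, h3, Matrix.diagonal_one]
    rw [h1, Matrix.inv_eq_right_inv h2, Matrix.diagonal_mul_diagonal]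
  have hzapp : ∀ k, z t k = (d k / (L + d k)) * y k := by
    intro k
    have h1 := congrFun (hz n) k
    rw [hM, Matrix.mulVec_diagonal] at h1
    rw [htn, h1, div_eq_mul_inv]
  have hLd : ∀ k, 0 < L + d k := fun k => by linarith [hd k]
  set cmin : ℝ := dmin / (L + dmin) with hcmin
  have hLdm : 0 < L + dmin := by linarith
  have hcmin_pos : 0 < cmin := div_pos hdmin_pos hLdm
  have hcmin_le : ∀ k, cmin ≤ d k / (L + d k) := by
    intro k
    rw [hcmin, div_le_div_iff₀ hLdm (hLd k)]
    nlinarith [hdmin_le k, hL_pos.le]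
  -- norm lower bound for z t
  have hnorm_eq : ∀ x : EuclideanSpace ℝ (Fin N), ‖x‖ = Real.sqrt (∑ k, (x k) ^ 2) := by
    intro x
    rw [EuclideanSpace.norm_eq]
    congr 1
    refine Finset.sum_congr rfl fun k _ => ?_
    rw [Real.norm_eq_abs, sq_abs]
  have hnormz : cmin * ‖y‖ ≤ ‖z t‖ := by
    rw [hnorm_eq, hnorm_eq]
    have h2 : cmin * Real.sqrt (∑ k, (y k) ^ 2) = Real.sqrt (∑ k, cmin ^ 2 * (y k) ^ 2) := by
      rw [← Finset.mul_sum, Real.sqrt_mul (sq_nonneg _), Real.sqrt_sq hcmin_pos.le]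
    rw [h2]
    apply Real.sqrt_le_sqrt
    apply Finset.sum_le_sum
    intro k _
    rw [hzapp k, mul_pow]
    have h3 : cmin ^ 2 ≤ (d k / (L + d k)) ^ 2 :=
      pow_le_pow_left₀ hcmin_pos.le (hcmin_le k) 2
    exact mul_le_mul_of_nonneg_right h3 (sq_nonneg _)
  -- bound on cmin
  set K := κ / (r n - 1) with hK
  have hrn1 : r n - 1 = (‖y‖ - s) / s := by rw [hrn]; field_simp
  have hKpos : 0 < K := by
    rw [hK, hκ]
    exact div_pos (div_pos hdmax_pos hdmin_pos) (by linarith)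
  have hdK : dmin * K = dmax * s / (‖y‖ - s) := by
    rw [hK, hκ, hrn1]
    field_simp
  have hLle : L ≤ dmax * s / (‖y‖ - s) := by
    rw [hlam]
    exact div_le_div₀ (by positivity) (mul_le_mul_of_nonneg_right hα2 hs0.le) hys le_rfl
  have hcmin_ge : 1 / (K + 1) ≤ cmin := by
    rw [hcmin, div_le_div_iff₀ (by linarith) hLdm]
    nlinarith [hLle, hdK]
  -- X := ‖z t‖ / s
  have hrn_pos : 0 < r n := by linarith
  have hX : r n / (K + 1) ≤ ‖z t‖ / s := by
    calc r n / (K + 1) = (1 / (K + 1)) * r n := by ring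
    _ ≤ cmin * r n := mul_le_mul_of_nonneg_right hcmin_ge hrn_pos.le
    _ = cmin * ‖y‖ / s := by rw [hrn]; ring
    _ ≤ ‖z t‖ / s := by gcongr
  -- triangle inequality step
  have hztilde_t : ztilde t = (1 - (t : ℝ) / T) • z t + ((t : ℝ) / T) • z0 := by
    have h1 := hzt n
    rw [← htn] at h1
    exact h1
  set a : ℝ := 1 - (t : ℝ) / T with ha
  set b : ℝ := (t : ℝ) / T with hb
  have hr0pos : 0 < r 0 := by linarith
  have hγr0 : γ / r 0 < 1 := by
    rw [div_lt_one hr0pos]; linarith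
  have ha_ge : 1 - γ / r 0 ≤ a := by
    linarith [htratio]
  have ha0 : 0 ≤ a := by linarith
  have hb0 : 0 ≤ b := by positivity
  have htri : a * ‖z t‖ - b * ‖z0‖ ≤ ‖ztilde t‖ := by
    rw [hztilde_t]
    have h1 := norm_add_le (a • z t + b • z0) (-(b • z0))
    have h2 : (a • z t + b • z0) + -(b • z0) = a • z t := add_neg_cancel_right _ _
    rw [h2, norm_neg, norm_smul, norm_smul, Real.norm_eq_abs, Real.norm_eq_abs,
      abs_of_nonneg ha0, abs_of_nonneg hb0] at h1
    linarith
  have hr0eq : r 0 = ‖z0‖ / s := by rw [hr 0, hz0]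
  have hbr0 : b * r 0 ≤ γ := by
    calc b * r 0 ≤ (γ / r 0) * r 0 := mul_le_mul_of_nonneg_right htratio hr0pos.le
    _ = γ := by field_simp
  have hrt : a * (‖z t‖ / s) - b * r 0 ≤ r t := by
    rw [hr t, hr0eq]
    calc a * (‖z t‖ / s) - b * (‖z0‖ / s) = (a * ‖z t‖ - b * ‖z0‖) / s := by ring
    _ ≤ ‖ztilde t‖ / s := by gcongr
  have hB0 : 0 ≤ r n / (K + 1) := by positivity
  have hP : (1 - γ / r 0) * (r n / (K + 1)) ≤ a * (‖z t‖ / s) :=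
    mul_le_mul ha_ge hX hB0 ha0
  rw [mul_div_assoc]
  linarith
end

section
/- (Recursive lower bound in the small-step regime.) Under the TAID regression recursion, let γ ∈ (0, 1], suppose κ > 1 and r_0 > 1, define β_0 := ((r_0 − 1)² + κ(2r_0 − 1))/(r_0 − 1 + κ)², β_1 := r_0²κ/(r_0 − 1 + κ)², β̄_0 := (1 − γ/r_0)·β_0 and β̄_1 := (1 − γ/r_0)·β_1, and let 1 ≤ t ≤ T be an integer. Suppose that for every 1 ≤ τ ≤ t one has τ/T ≤ γ/r_0, r_{τ−1} > 1, and λ_{τ−1} = α_{τ−1}·√(Nε)/(‖z̃_{τ−1}‖ − √(Nε)) for some α_{τ−1} ∈ [d_min, d_max], and suppose 0 < β̄_0 < 1. Then r_t ≥ β̄_0ᵗ·r_0 − (β̄_1 + γ)·(1 − β̄_0ᵗ)/(1 − β̄_0). -/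
/-!
Write `s = √(Nε)`. The choice `λ_τ = α s / (‖z̃_τ‖ - s)` with `α ≤ d_max = κ d_min ≤ κ d_k`
makes every diagonal entry `d_k / (λ_τ + d_k)` at least `(r_τ - 1) / (r_τ - 1 + κ)`, so
`‖z_{τ+1}‖ ≥ (r_τ - 1) r_τ / (r_τ - 1 + κ) · s`. The function `x ↦ (x - 1) x / (x - 1 + κ)` is
convex for `κ ≥ 1` and `β₀ x - β₁` is its tangent line at `r₀`. Mixing in `z₀` with weight
`u = (τ+1)/T ≤ γ/r₀` loses at most `u r₀ ≤ γ`, which gives the affine recursion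
`r_{τ+1} ≥ β̄₀ r_τ - (β̄₁ + γ)`; unrolling it yields the bound.
-/

open Matrix

lemma tangent_le_mul_div_add {κ r₀ x : ℝ} (hκ : 1 ≤ κ) (hr₀ : 0 < r₀ - 1 + κ)
    (hx : 0 < x - 1 + κ) :
    ((r₀ - 1) ^ 2 + κ * (2 * r₀ - 1)) / (r₀ - 1 + κ) ^ 2 * x - r₀ ^ 2 * κ / (r₀ - 1 + κ) ^ 2
      ≤ (x - 1) * x / (x - 1 + κ) := by
  have gap : (x - 1) * x / (x - 1 + κ) -
      (((r₀ - 1) ^ 2 + κ * (2 * r₀ - 1)) / (r₀ - 1 + κ) ^ 2 * x - r₀ ^ 2 * κ / (r₀ - 1 + κ) ^ 2)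
      = κ * (κ - 1) * (x - r₀) ^ 2 / ((x - 1 + κ) * (r₀ - 1 + κ) ^ 2) := by
    field_simp
    ring
  have gap_nonneg : 0 ≤ κ * (κ - 1) * (x - r₀) ^ 2 / ((x - 1 + κ) * (r₀ - 1 + κ) ^ 2) := by
    have : 0 ≤ κ - 1 := by linarith
    positivity
  linarith

lemma div_add_le_div_div_add {a d α κ : ℝ} (ha : 0 < a) (hd : 0 < d) (hα : 0 ≤ α)
    (hακ : α ≤ κ * d) : a / (a + κ) ≤ d / (α / a + d) := by
  have hκ : 0 ≤ κ := nonneg_of_mul_nonneg_left (hα.trans hακ) hd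
  rw [div_le_div_iff₀ (by positivity) (by positivity)]
  field_simp
  nlinarith

lemma Matrix.diagonal_mul_inv_smul_one_add_diagonal {n K : Type*} [Fintype n] [DecidableEq n]
    [Field K] (d : n → K) {l : K} (h : ∀ k, l + d k ≠ 0) :
    diagonal d * (l • (1 : Matrix n n K) + diagonal d)⁻¹ = diagonal fun k => d k / (l + d k) := by
  have hsum : l • (1 : Matrix n n K) + diagonal d = diagonal fun k => l + d k := by
    rw [smul_one_eq_diagonal, diagonal_add]
  have hinv : (diagonal fun k => l + d k)⁻¹ = diagonal fun k => (l + d k)⁻¹ := by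
    refine inv_eq_right_inv ?_
    rw [diagonal_mul_diagonal, ← diagonal_one]
    exact congrArg diagonal (funext fun k => mul_inv_cancel₀ (h k))
  simp only [hsum, hinv, diagonal_mul_diagonal, div_eq_mul_inv]

lemma EuclideanSpace.mul_norm_le_norm_of_le_coord {ι : Type*} [Fintype ι]
    {v w : EuclideanSpace ℝ ι} {f : ι → ℝ} {c : ℝ} (hc : 0 ≤ c) (hf : ∀ i, c ≤ f i)
    (hw : ∀ i, w i = f i * v i) : c * ‖v‖ ≤ ‖w‖ := by
  rw [EuclideanSpace.norm_eq, EuclideanSpace.norm_eq, ← Real.sqrt_sq hc,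
    ← Real.sqrt_mul (sq_nonneg c), Finset.mul_sum]
  refine Real.sqrt_le_sqrt (Finset.sum_le_sum fun i _ => ?_)
  rw [hw, Real.norm_eq_abs, Real.norm_eq_abs, sq_abs, sq_abs, mul_pow]
  gcongr
  exact hf i

lemma sub_le_norm_smul_add_smul {E : Type*} [SeminormedAddCommGroup E] [NormedSpace ℝ E]
    (a b : E) {u : ℝ} (hu : 0 ≤ u) : (1 - u) * ‖a‖ - u * ‖b‖ ≤ ‖(1 - u) • a + u • b‖ :=
  calc (1 - u) * ‖a‖ - u * ‖b‖ ≤ ‖(1 - u) • a‖ - ‖u • b‖ := by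
        rw [norm_smul, norm_smul, Real.norm_of_nonneg hu, Real.norm_eq_abs]
        gcongr
        exact le_abs_self _
    _ ≤ ‖(1 - u) • a + u • b‖ := norm_sub_le_norm_add _ _

lemma pow_mul_sub_le_of_affine_step {x : ℕ → ℝ} {b c : ℝ} (hb : 0 ≤ b) (hb₁ : b ≠ 1) {t : ℕ}
    (hstep : ∀ m < t, b * x m - c ≤ x (m + 1)) :
    b ^ t * x 0 - c * (1 - b ^ t) / (1 - b) ≤ x t := by
  induction t with
  | zero => simp
  | succ n ih =>
    have hb' : 1 - b ≠ 0 := sub_ne_zero.mpr hb₁.symm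
    calc b ^ (n + 1) * x 0 - c * (1 - b ^ (n + 1)) / (1 - b)
        = b * (b ^ n * x 0 - c * (1 - b ^ n) / (1 - b)) - c := by field_simp; ring
      _ ≤ b * x n - c := by gcongr; exact ih fun m hm => hstep m (by omega)
      _ ≤ x (n + 1) := hstep n (by omega)

lemma taid_step_norm_ge {ι : Type*} [Fintype ι] [DecidableEq ι] {d : ι → ℝ} (hd : ∀ k, 0 < d k)
    {κ α s u x r₀ : ℝ} (hκ : 0 ≤ κ) (hα : 0 ≤ α) (hακ : ∀ k, α ≤ κ * d k) (hs : 0 < s)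
    (hu₀ : 0 ≤ u) (hu₁ : u ≤ 1) (hx : 1 < x) {v w z₀ : EuclideanSpace ℝ ι}
    (hv : ‖v‖ = x * s) (hz₀ : ‖z₀‖ = r₀ * s)
    (hw : w.ofLp = (diagonal d * ((α * s / (‖v‖ - s)) • (1 : Matrix ι ι ℝ) + diagonal d)⁻¹) *ᵥ
      v.ofLp) :
    ((1 - u) * ((x - 1) / (x - 1 + κ) * x) - u * r₀) * s ≤ ‖(1 - u) • w + u • z₀‖ := by
  have hx₁ : 0 < x - 1 := by linarith
  have hl : α * s / (‖v‖ - s) = α / (x - 1) := by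
    rw [hv, ← sub_one_mul, mul_div_mul_right _ _ hs.ne']
  have hwk : ∀ k, w k = d k / (α / (x - 1) + d k) * v k := fun k => by
    have hpos : ∀ k, α / (x - 1) + d k ≠ 0 := fun k =>
      (add_pos_of_nonneg_of_pos (div_nonneg hα hx₁.le) (hd k)).ne'
    rw [congrFun hw k, hl, diagonal_mul_inv_smul_one_add_diagonal d hpos, mulVec_diagonal]
  have hcontr : (x - 1) / (x - 1 + κ) * ‖v‖ ≤ ‖w‖ :=
    EuclideanSpace.mul_norm_le_norm_of_le_coord (by positivity)
      (fun k => div_add_le_div_div_add hx₁ (hd k) hα (hακ k)) hwk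
  calc ((1 - u) * ((x - 1) / (x - 1 + κ) * x) - u * r₀) * s
      = (1 - u) * ((x - 1) / (x - 1 + κ) * ‖v‖) - u * ‖z₀‖ := by rw [hv, hz₀]; ring
    _ ≤ (1 - u) * ‖w‖ - u * ‖z₀‖ := by gcongr
    _ ≤ ‖(1 - u) • w + u • z₀‖ := sub_le_norm_smul_add_smul w z₀ hu₀

lemma taid_affine_step_le {κ r₀ γ u x : ℝ} (hκ : 1 ≤ κ) (hr₀ : 1 < r₀) (hγ : γ ≤ 1)
    (hu : u ≤ γ / r₀) (hx : 1 < x) :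
    (1 - γ / r₀) * (((r₀ - 1) ^ 2 + κ * (2 * r₀ - 1)) / (r₀ - 1 + κ) ^ 2) * x -
        ((1 - γ / r₀) * (r₀ ^ 2 * κ / (r₀ - 1 + κ) ^ 2) + γ)
      ≤ (1 - u) * ((x - 1) / (x - 1 + κ) * x) - u * r₀ := by
  have hρ : 0 ≤ 1 - γ / r₀ := sub_nonneg.2 ((div_le_one (by linarith)).2 (by linarith))
  have hur : u * r₀ ≤ γ := (le_div_iff₀ (by linarith)).1 hu
  have hg : 0 ≤ (x - 1) / (x - 1 + κ) * x := by
    have : 0 ≤ x - 1 := by linarith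
    have : 0 ≤ x - 1 + κ := by linarith
    positivity
  calc _ = (1 - γ / r₀) * (((r₀ - 1) ^ 2 + κ * (2 * r₀ - 1)) / (r₀ - 1 + κ) ^ 2 * x -
          r₀ ^ 2 * κ / (r₀ - 1 + κ) ^ 2) - γ := by ring
    _ ≤ (1 - γ / r₀) * ((x - 1) * x / (x - 1 + κ)) - γ := by
        gcongr
        exact tangent_le_mul_div_add hκ (by linarith) (by linarith)
    _ ≤ (1 - u) * ((x - 1) / (x - 1 + κ) * x) - u * r₀ := by
        rw [mul_div_right_comm]
        nlinarith [mul_le_mul_of_nonneg_right hu hg]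

theorem taid_recursive_lower_bound_small_steps_general
    (N T : ℕ) (hN : 1 ≤ N) (ε : ℝ) (hε : 0 < ε)
    (d : Fin N → ℝ) (hd : ∀ k, 0 < d k) (dmin dmax : ℝ)
    (hdminEq : dmin = ⨅ k, d k)
    (κ : ℝ) (hκeq : κ = dmax / dmin) (hκ : 1 < κ)
    (lam : ℕ → ℝ)
    (z0 : EuclideanSpace ℝ (Fin N))
    (z ztilde : ℕ → EuclideanSpace ℝ (Fin N))
    (hz0 : ztilde 0 = z0)
    (hz : ∀ τ : ℕ, z (τ + 1) =
      ((Matrix.diagonal d) *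
        (lam τ • (1 : Matrix (Fin N) (Fin N) ℝ) + Matrix.diagonal d)⁻¹).mulVec (ztilde τ))
    (hzt : ∀ τ : ℕ, ztilde (τ + 1) =
      (1 - ((τ + 1 : ℕ) : ℝ) / (T : ℝ)) • z (τ + 1) + (((τ + 1 : ℕ) : ℝ) / (T : ℝ)) • z0)
    (r : ℕ → ℝ) (hr : ∀ τ, r τ = ‖ztilde τ‖ / Real.sqrt ((N : ℝ) * ε))
    (γ : ℝ) (hγ : γ ∈ Set.Ioc (0 : ℝ) 1)
    (hr0 : 1 < r 0)
    (β₀ β₁ βb₀ βb₁ : ℝ)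
    (hβ₀ : β₀ = ((r 0 - 1) ^ 2 + κ * (2 * r 0 - 1)) / (r 0 - 1 + κ) ^ 2)
    (hβ₁ : β₁ = (r 0) ^ 2 * κ / (r 0 - 1 + κ) ^ 2)
    (hβb₀ : βb₀ = (1 - γ / r 0) * β₀)
    (hβb₁ : βb₁ = (1 - γ / r 0) * β₁)
    (t : ℕ)
    (hsteps : ∀ τ : ℕ, 1 ≤ τ → τ ≤ t →
      ((τ : ℝ) / (T : ℝ) ≤ γ / r 0) ∧ (1 < r (τ - 1)) ∧
      ∃ α ∈ Set.Icc dmin dmax,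
        lam (τ - 1) =
          α * Real.sqrt ((N : ℝ) * ε) / (‖ztilde (τ - 1)‖ - Real.sqrt ((N : ℝ) * ε)))
    (hβb₀pos : 0 < βb₀) (hβb₀lt : βb₀ < 1) :
    βb₀ ^ t * r 0 - (βb₁ + γ) * (1 - βb₀ ^ t) / (1 - βb₀) ≤ r t := by
  set s := Real.sqrt ((N : ℝ) * ε)
  have hs : 0 < s := Real.sqrt_pos.mpr (mul_pos (by exact_mod_cast hN) hε)
  have hnorm : ∀ τ, ‖ztilde τ‖ = r τ * s := fun τ => by rw [hr τ, div_mul_cancel₀ _ hs.ne']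
  have hdmin : 0 ≤ dmin := hdminEq ▸ Real.iInf_nonneg fun k => (hd k).le
  have hdmax_le : ∀ k, dmax ≤ κ * d k := fun k => by
    have hdmin_ne : dmin ≠ 0 := fun h => by norm_num [hκeq, h] at hκ
    calc dmax = κ * dmin := by rw [hκeq, div_mul_cancel₀ _ hdmin_ne]
      _ ≤ κ * d k := by
        gcongr
        exact hdminEq ▸ ciInf_le (Set.finite_range d).bddBelow k
  have step : ∀ τ < t, βb₀ * r τ - (βb₁ + γ) ≤ r (τ + 1) := by
    intro τ hτ
    obtain ⟨hu, hrτ, α, ⟨hα₀, hα₁⟩, hlam⟩ := hsteps (τ + 1) (by omega) hτ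
    rw [Nat.add_sub_cancel] at hrτ hlam
    have hu₁ : ((τ + 1 : ℕ) : ℝ) / T ≤ 1 :=
      hu.trans ((div_le_one (by linarith)).2 (by linarith [hγ.2]))
    have hnext := taid_step_norm_ge hd (by linarith) (hdmin.trans hα₀)
      (fun k => hα₁.trans (hdmax_le k)) hs (by positivity) hu₁ hrτ (hnorm τ) (hz0 ▸ hnorm 0)
      (by rw [hz τ, hlam])
    rw [← hzt, hnorm] at hnext
    rw [hβb₀, hβb₁, hβ₀, hβ₁]
    exact (taid_affine_step_le hκ.le hr0 hγ.2 hu hrτ).trans (le_of_mul_le_mul_right hnext hs)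
  exact pow_mul_sub_le_of_affine_step hβb₀pos.le hβb₀lt.ne step

/-- (Recursive lower bound in the small-step regime.) Under the TAID
regression recursion, with `γ ∈ (0,1]`, `κ > 1`, `r 0 > 1`, `β̄₀ := (1 − γ/r 0)·β₀`,
`β̄₁ := (1 − γ/r 0)·β₁`, `0 < β̄₀ < 1`, and suitable hypotheses along steps `1 ≤ τ ≤ t`,
one has `r t ≥ β̄₀ᵗ·(r 0) − (β̄₁ + γ)·(1 − β̄₀ᵗ)/(1 − β̄₀)`. -/
theorem taid_recursive_lower_bound_small_steps
    (N T : ℕ) (hN : 1 ≤ N) (hT : 1 ≤ T) (ε : ℝ) (hε : 0 < ε)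
    (d : Fin N → ℝ) (hd : ∀ k, 0 < d k) (dmin dmax : ℝ)
    (hdminEq : dmin = ⨅ k, d k) (hdmaxEq : dmax = ⨆ k, d k)
    (κ : ℝ) (hκeq : κ = dmax / dmin) (hκ : 1 < κ)
    (lam : ℕ → ℝ)
    (z0 : EuclideanSpace ℝ (Fin N))
    (z ztilde : ℕ → EuclideanSpace ℝ (Fin N))
    (hz0 : ztilde 0 = z0)
    (hz : ∀ τ : ℕ, z (τ + 1) =
      ((Matrix.diagonal d) *
        (lam τ • (1 : Matrix (Fin N) (Fin N) ℝ) + Matrix.diagonal d)⁻¹).mulVec (ztilde τ))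
    (hzt : ∀ τ : ℕ, ztilde (τ + 1) =
      (1 - ((τ + 1 : ℕ) : ℝ) / (T : ℝ)) • z (τ + 1) + (((τ + 1 : ℕ) : ℝ) / (T : ℝ)) • z0)
    (r : ℕ → ℝ) (hr : ∀ τ, r τ = ‖ztilde τ‖ / Real.sqrt ((N : ℝ) * ε))
    (γ : ℝ) (hγ : γ ∈ Set.Ioc (0 : ℝ) 1)
    (hr0 : 1 < r 0)
    (β₀ β₁ βb₀ βb₁ : ℝ)
    (hβ₀ : β₀ = ((r 0 - 1) ^ 2 + κ * (2 * r 0 - 1)) / (r 0 - 1 + κ) ^ 2)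
    (hβ₁ : β₁ = (r 0) ^ 2 * κ / (r 0 - 1 + κ) ^ 2)
    (hβb₀ : βb₀ = (1 - γ / r 0) * β₀)
    (hβb₁ : βb₁ = (1 - γ / r 0) * β₁)
    (t : ℕ) (ht1 : 1 ≤ t) (htT : t ≤ T)
    (hsteps : ∀ τ : ℕ, 1 ≤ τ → τ ≤ t →
      ((τ : ℝ) / (T : ℝ) ≤ γ / r 0) ∧ (1 < r (τ - 1)) ∧
      ∃ α ∈ Set.Icc dmin dmax,
        lam (τ - 1) =
          α * Real.sqrt ((N : ℝ) * ε) / (‖ztilde (τ - 1)‖ - Real.sqrt ((N : ℝ) * ε)))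
    (hβb₀pos : 0 < βb₀) (hβb₀lt : βb₀ < 1) :
    βb₀ ^ t * r 0 - (βb₁ + γ) * (1 - βb₀ ^ t) / (1 - βb₀) ≤ r t :=
  taid_recursive_lower_bound_small_steps_general N T hN ε hε d hd dmin dmax hdminEq κ hκeq hκ lam z0
    z ztilde hz0 hz hzt r hr γ hγ hr0 β₀ β₁ βb₀ βb₁ hβ₀ hβ₁ hβb₀ hβb₁ t hsteps hβb₀pos hβb₀lt
end
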